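/- arXiv:0810.1539 — 2 statements merged into one kernel-verified Lean document; each statement's English description precedes it below -/
import Mathlib

section
/- Let Δ be a (d−1)-dimensional simplicial complex with d ≥ 2 satisfying properties (I)–(III), let S ⊆ {1,…,d} with |S| = 2, and let v_0 be a vertex of Δ_S. Then every equivalence class in the edge-path group E(Δ, v_0) can be represented by a closed edge path at v_0 all of whose edges lie in Δ_S. -/
/-- `Δ` is an (abstract) simplicial complex on the (finite) vertex set `V`:
faces are closed under taking subsets and every singleton is a face. -/
def IsComplex {V : Type*} [DecidableEq V] (Δ : Set (Finset V)) : Prop :=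
  (∀ F ∈ Δ, ∀ G, G ⊆ F → G ∈ Δ) ∧ ∀ v : V, ({v} : Finset V) ∈ Δ

/-- `F` is a facet (maximal face) of the collection of faces `Δ`. -/
def IsFacet {V : Type*} (Δ : Set (Finset V)) (F : Finset V) : Prop :=
  F ∈ Δ ∧ ∀ G ∈ Δ, F ⊆ G → G = F

/-- Every facet has `d` vertices, i.e. dimension `d - 1`. -/
def IsPure {V : Type*} (Δ : Set (Finset V)) (d : ℕ) : Prop :=
  ∀ F, IsFacet Δ F → F.card = d

/-- `Δ` has dimension `d - 1`: all faces have at most `d` vertices and some face has `d`. -/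
def HasDim {V : Type*} (Δ : Set (Finset V)) (d : ℕ) : Prop :=
  (∀ F ∈ Δ, F.card ≤ d) ∧ ∃ F ∈ Δ, F.card = d

/-- The link of the face `F`. -/
def link {V : Type*} [DecidableEq V] (Δ : Set (Finset V)) (F : Finset V) : Set (Finset V) :=
  {G | G ∈ Δ ∧ Disjoint F G ∧ F ∪ G ∈ Δ}

/-- The closed star of the face `F`. -/
def closedStar {V : Type*} [DecidableEq V] (Δ : Set (Finset V)) (F : Finset V) :
    Set (Finset V) :=
  {G | G ∈ Δ ∧ F ∪ G ∈ Δ}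

/-- The collection of faces `K` is connected: any two of its vertices are joined by a
walk along its `1`-dimensional faces. -/
def Conn {V : Type*} [DecidableEq V] (K : Set (Finset V)) : Prop :=
  ∀ v w : V, ({v} : Finset V) ∈ K → ({w} : Finset V) ∈ K →
    Relation.ReflTransGen (fun a b => ({a, b} : Finset V) ∈ K) v w

/-- Property (III): the link of every face with fewer than `d - 1` vertices
(including the empty face) is connected. -/
def LinksConn {V : Type*} [DecidableEq V] (Δ : Set (Finset V)) (d : ℕ) : Prop :=
  ∀ F ∈ Δ, F.card < d - 1 → Conn (link Δ F)

/-- Property (II): `Δ` is balanced with respect to the coloring `κ`: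
the coloring is injective on every face. -/
def IsBalanced {V : Type*} {d : ℕ} (Δ : Set (Finset V)) (κ : V → Fin d) : Prop :=
  ∀ F ∈ Δ, Set.InjOn κ ↑F

/-- The rank-selected subcomplex `Δ_S`. -/
def rankSel {V : Type*} {d : ℕ} (Δ : Set (Finset V)) (κ : V → Fin d) (S : Finset (Fin d)) :
    Set (Finset V) :=
  {F | F ∈ Δ ∧ ∀ v ∈ F, κ v ∈ S}

/-- `Δ` is strongly connected: any two facets are joined by a chain of facets
in which consecutive facets share `d - 1` vertices. -/
def StronglyConnected {V : Type*} [DecidableEq V] (Δ : Set (Finset V)) (d : ℕ) : Prop :=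
  ∀ F F', IsFacet Δ F → IsFacet Δ F' →
    Relation.ReflTransGen
      (fun A B => IsFacet Δ A ∧ IsFacet Δ B ∧ (A ∩ B).card = d - 1) F F'
/-- An edge path in `Δ`, encoded by its (nonempty, length `≥ 2`) list of vertices:
consecutive vertices span a face of `Δ` (possibly a repeated vertex, giving a
degenerate edge). -/
def IsEdgePath {V : Type*} [DecidableEq V] (Δ : Set (Finset V)) (γ : List V) : Prop :=
  2 ≤ γ.length ∧ List.Chain' (fun a b => ({a, b} : Finset V) ∈ Δ) γ

/-- An edge path in `Δ` from `v` to `w`. -/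
def EdgePathFrom {V : Type*} [DecidableEq V] (Δ : Set (Finset V)) (γ : List V) (v w : V) :
    Prop :=
  IsEdgePath Δ γ ∧ γ.head? = some v ∧ γ.getLast? = some w

/-- Simple equivalence of edge paths: a segment `(x,y)(y,z)` is replaced by the single
edge `(x,z)` (with arbitrary, possibly empty, prefix and suffix), where the not
necessarily distinct vertices `x, y, z` satisfy `{x, y, z} ∈ Δ`. -/
inductive SimpleEquiv {V : Type*} [DecidableEq V] (Δ : Set (Finset V)) :
    List V → List V → Prop
  | contract (a b : List V) (x y z : V) :
      ({x, y, z} : Finset V) ∈ Δ →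
      SimpleEquiv Δ (a ++ x :: y :: z :: b) (a ++ x :: z :: b)

/-- Equivalence of edge paths: the reflexive-symmetric-transitive closure of
simple equivalence. -/
def EdgeEquiv {V : Type*} [DecidableEq V] (Δ : Set (Finset V)) : List V → List V → Prop :=
  Relation.EqvGen (SimpleEquiv Δ)


/-!
A vertex `p` of `γ` whose color lies outside `S` sits in a segment `q, p, w` of `γ`. The link of
`p` is again balanced with connected links, and still carries both colors of `S`; so, by induction
on the number of colors, `q` and `w` are joined in the link of `p` by a walk whose inner vertices
have colors in `S`. Replacing `p` by that walk sweeps the path across the cone from `p` over the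
walk, which is an equivalence of edge paths, and removes one vertex with a color outside `S`.
-/

section

variable {V : Type*} [DecidableEq V] {d : ℕ}

section Links

variable {Δ : Set (Finset V)}

@[simp]
lemma link_empty (Δ : Set (Finset V)) : link Δ ∅ = Δ := by
  ext G; simp [link]

lemma link_subset (Δ : Set (Finset V)) (F : Finset V) : link Δ F ⊆ Δ := fun _ h => h.1

lemma link_link (hdown : ∀ F ∈ Δ, ∀ G ⊆ F, G ∈ Δ) {E F : Finset V} (hF : F ∈ link Δ E) :
    link (link Δ E) F = link Δ (E ∪ F) := by
  obtain ⟨-, hEF, -⟩ := hF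
  ext G
  simp only [link, Set.mem_ofPred_eq, Finset.disjoint_union_left, Finset.union_assoc]
  constructor
  · rintro ⟨⟨hG, hEG, -⟩, hFG, -, -, hEFG⟩
    exact ⟨hG, ⟨hEG, hFG⟩, hEFG⟩
  · rintro ⟨hG, ⟨hEG, hFG⟩, hEFG⟩
    refine ⟨⟨hG, hEG, hdown _ hEFG _ ?_⟩, hFG, hdown _ hEFG _ Finset.subset_union_right,
      Finset.disjoint_union_right.2 ⟨hEF, hEG⟩, hEFG⟩
    exact Finset.union_subset_union_right Finset.subset_union_right

lemma singleton_mem_link_singleton (hdown : ∀ F ∈ Δ, ∀ G ⊆ F, G ∈ Δ) {p q : V}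
    (hpq : ({p, q} : Finset V) ∈ Δ) (hqp : q ≠ p) : ({q} : Finset V) ∈ link Δ {p} :=
  ⟨hdown _ hpq _ (by simp), by simpa using hqp.symm, by rwa [← Finset.insert_eq]⟩

lemma insert_mem_of_pair_mem_link {p a b : V} (h : ({a, b} : Finset V) ∈ link Δ {p}) :
    ({a, b, p} : Finset V) ∈ Δ := by
  convert h.2.2 using 1
  ext; simp only [Finset.mem_insert, Finset.mem_union, Finset.mem_singleton]; tauto

end Links

/-- Properties (II) and (III) for a complex whose colors lie in `C`; unlike the properties
of `Δ` with all `d` colors, this form passes to vertex links. -/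
structure IsBalancedLinkConn (κ : V → Fin d) (Δ : Set (Finset V)) (C : Finset (Fin d)) :
    Prop where
  down_closed : ∀ F ∈ Δ, ∀ G ⊆ F, G ∈ Δ
  color_mem : ∀ F ∈ Δ, ∀ v ∈ F, κ v ∈ C
  balanced : IsBalanced Δ κ
  linksConn : LinksConn Δ C.card

def JoinedVia (Δ : Set (Finset V)) (κ : V → Fin d) (T : Finset (Fin d)) (u w : V) : Prop :=
  ∃ l : List V, (u :: l ++ [w]).IsChain (fun a b => ({a, b} : Finset V) ∈ Δ) ∧
    ∀ x ∈ l, κ x ∈ T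

namespace JoinedVia

variable {Δ Δ' : Set (Finset V)} {κ : V → Fin d} {T : Finset (Fin d)} {u w b c : V}

lemma of_pair_mem (h : ({u, w} : Finset V) ∈ Δ) : JoinedVia Δ κ T u w :=
  ⟨[], by simpa using h, by simp⟩

lemma trans (hub : JoinedVia Δ κ T u b) (hbc : JoinedVia Δ κ T b c) (hb : κ b ∈ T) :
    JoinedVia Δ κ T u c := by
  obtain ⟨l₁, hl₁, hl₁T⟩ := hub
  obtain ⟨l₂, hl₂, hl₂T⟩ := hbc
  refine ⟨l₁ ++ b :: l₂, ?_, ?_⟩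
  · simpa using hl₁.append_overlap (l₂ := [b]) (l₃ := l₂ ++ [c]) (by simpa using hl₂) (by simp)
  · simp only [List.mem_append, List.mem_cons]
    rintro x (hx | rfl | hx)
    exacts [hl₁T x hx, hb, hl₂T x hx]

lemma mono (hΔ : Δ ⊆ Δ') (h : JoinedVia Δ κ T u w) : JoinedVia Δ' κ T u w :=
  let ⟨l, hl, hlT⟩ := h
  ⟨l, hl.imp fun _ _ hab => hΔ hab, hlT⟩

lemma pair_mem_or_exists_last (h : JoinedVia Δ κ T u w) :
    ({u, w} : Finset V) ∈ Δ ∨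
      ∃ q, JoinedVia Δ κ T u q ∧ κ q ∈ T ∧ ({q, w} : Finset V) ∈ Δ := by
  obtain ⟨l, hl, hlT⟩ := h
  rcases l.eq_nil_or_concat' with rfl | ⟨l₀, q, rfl⟩
  · left; simpa using hl
  · right
    have hsplit : (u :: l₀ ++ [q]).IsChain (fun a b => ({a, b} : Finset V) ∈ Δ) ∧
        ({q, w} : Finset V) ∈ Δ := by
      simpa [List.isChain_split] using hl
    exact ⟨q, ⟨l₀, hsplit.1, fun x hx => hlT x (by simp [hx])⟩, hlT q (by simp), hsplit.2⟩

end JoinedVia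

namespace IsBalancedLinkConn

variable {Δ : Set (Finset V)} {κ : V → Fin d} {C : Finset (Fin d)}

lemma link_singleton (hG : IsBalancedLinkConn κ Δ C) {b : V} (hb : ({b} : Finset V) ∈ Δ) :
    IsBalancedLinkConn κ (link Δ {b}) (C.erase (κ b)) where
  down_closed := by
    rintro F ⟨hF, hbF, hbF'⟩ G hGF
    exact ⟨hG.down_closed F hF G hGF, hbF.mono_right hGF,
      hG.down_closed _ hbF' _ (Finset.union_subset_union_right hGF)⟩
  color_mem := by
    rintro F ⟨-, hbF, hbF'⟩ v hv
    have hvb : v ≠ b := by rintro rfl; exact Finset.disjoint_singleton_left.1 hbF hv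
    refine Finset.mem_erase.2 ⟨fun hκ => hvb ?_, hG.color_mem _ hbF' v (by simp [hv])⟩
    exact hG.balanced _ hbF' (by simp [hv]) (by simp) hκ
  balanced F hF := hG.balanced F hF.1
  linksConn F hF hFcard := by
    rw [link_link hG.down_closed hF]
    obtain ⟨-, hbF, hbF'⟩ := hF
    refine hG.linksConn _ hbF' ?_
    rw [Finset.card_union_of_disjoint hbF, Finset.card_singleton]
    rw [Finset.card_erase_of_mem (hG.color_mem _ hb b (by simp))] at hFcard
    omega

-- `Δ` and `C` are bound here rather than as section variables: they change in the recursive call.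
theorem joinedVia {Δ : Set (Finset V)} {C : Finset (Fin d)} (hG : IsBalancedLinkConn κ Δ C)
    {T : Finset (Fin d)} (hTC : T ⊆ C) (hT : T.card = 2) {u w : V} (hu : ({u} : Finset V) ∈ Δ) (hw : ({w} : Finset V) ∈ Δ) :
    JoinedVia Δ κ T u w := by
  have hC : 2 ≤ C.card := hT ▸ Finset.card_le_card hTC
  have hconn : Conn Δ := by
    simpa using hG.linksConn ∅ (hG.down_closed _ hu ∅ (Finset.empty_subset _))
      (by rw [Finset.card_empty]; omega)
  have hwalk := hconn u w hu hw
  clear hw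
  induction hwalk with
  | refl => exact .of_pair_mem (by simpa using hu)
  | @tail b c _ hbc ih =>
    by_cases hbT : κ b ∈ T
    · exact ih.trans (.of_pair_mem hbc) hbT
    have hb : ({b} : Finset V) ∈ Δ := hG.down_closed _ hbc _ (by simp)
    have hbC : κ b ∈ C := hG.color_mem _ hb b (by simp)
    have detour : ∀ x, ({x, b} : Finset V) ∈ Δ → JoinedVia Δ κ T x c := by
      intro x hxb
      by_cases hxb' : x = b
      · exact .of_pair_mem (hxb' ▸ hbc)
      by_cases hcb : c = b
      · exact .of_pair_mem (hcb ▸ hxb)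
      have hTC' : T ⊆ C.erase (κ b) := fun t ht =>
        Finset.mem_erase.2 ⟨fun h => hbT (h ▸ ht), hTC ht⟩
      refine JoinedVia.mono (link_subset Δ {b}) ((hG.link_singleton hb).joinedVia hTC' hT ?_ ?_)
      · exact singleton_mem_link_singleton hG.down_closed (by rwa [Finset.pair_comm]) hxb'
      · exact singleton_mem_link_singleton hG.down_closed hbc hcb
    rcases ih.pair_mem_or_exists_last with hub | ⟨q, huq, hqT, hqb⟩
    · exact detour u hub
    · exact huq.trans (detour q hqb) hqT
termination_by C.card
decreasing_by exact Finset.card_erase_lt_of_mem hbC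

end IsBalancedLinkConn

section EdgePaths

variable {Δ : Set (Finset V)}

lemma isEdgePath_iff {γ : List V} :
    IsEdgePath Δ γ ↔ 2 ≤ γ.length ∧ γ.IsChain (fun a b => ({a, b} : Finset V) ∈ Δ) :=
  Iff.rfl

lemma SimpleEquiv.edgePathFrom_iff (hdown : ∀ F ∈ Δ, ∀ G ⊆ F, G ∈ Δ) {γ γ' : List V}
    (h : SimpleEquiv Δ γ γ') {v w : V} : EdgePathFrom Δ γ v w ↔ EdgePathFrom Δ γ' v w := by
  obtain ⟨A, B, x, y, z, hxyz⟩ := h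
  have hedge : ∀ a ∈ ({x, y, z} : Finset V), ∀ b ∈ ({x, y, z} : Finset V),
      ({a, b} : Finset V) ∈ Δ := fun a ha b hb =>
    hdown _ hxyz _ (Finset.insert_subset ha (Finset.singleton_subset_iff.2 hb))
  have hxy := hedge x (by simp) y (by simp)
  have hyz := hedge y (by simp) z (by simp)
  have hxz := hedge x (by simp) z (by simp)
  simp only [EdgePathFrom, isEdgePath_iff, List.isChain_append_cons_cons, List.isChain_cons_cons,
    hxy, hyz, hxz, true_and]
  have hhead : (A ++ x :: y :: z :: B).head? = (A ++ x :: z :: B).head? := by cases A <;> rfl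
  have hlast : (A ++ x :: y :: z :: B).getLast? = (A ++ x :: z :: B).getLast? := by
    simp [List.getLast?_append]
  have hlen : 2 ≤ (A ++ x :: y :: z :: B).length ∧ 2 ≤ (A ++ x :: z :: B).length := by
    simp only [List.length_append, List.length_cons]; omega
  rw [hhead, hlast]
  simp only [hlen, true_and]

lemma EdgeEquiv.edgePathFrom_iff (hdown : ∀ F ∈ Δ, ∀ G ⊆ F, G ∈ Δ) {γ γ' : List V}
    (h : EdgeEquiv Δ γ γ') {v w : V} : EdgePathFrom Δ γ v w ↔ EdgePathFrom Δ γ' v w := by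
  induction h with
  | rel _ _ h => exact h.edgePathFrom_iff hdown
  | refl => rfl
  | symm _ _ _ ih => exact ih.symm
  | trans _ _ _ _ _ ih₁ ih₂ => exact ih₁.trans ih₂

lemma edgeEquiv_of_isChain_link {p q w : V} {l : List V}
    (hl : (q :: l ++ [w]).IsChain (fun a b => ({a, b} : Finset V) ∈ link Δ {p}))
    (A B : List V) : EdgeEquiv Δ (A ++ q :: p :: w :: B) (A ++ q :: (l ++ w :: B)) := by
  induction l generalizing A q with
  | nil =>
    have hqwp := insert_mem_of_pair_mem_link (Δ := Δ) (by simpa using hl)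
    rw [Finset.pair_comm] at hqwp
    exact .rel _ _ (.contract A B q p w hqwp)
  | cons x l ih =>
    simp only [List.cons_append, List.isChain_cons_cons] at hl
    have hcontract : SimpleEquiv Δ (A ++ q :: x :: p :: w :: B) (A ++ q :: p :: w :: B) :=
      .contract A (w :: B) q x p (insert_mem_of_pair_mem_link hl.1)
    have hsweep := ih hl.2 (A ++ [q])
    simp only [List.append_assoc, List.cons_append, List.nil_append] at hsweep
    exact .trans _ _ _ (.symm _ _ (.rel _ _ hcontract)) hsweep

end EdgePaths

lemma List.exists_eq_append_cons_cons_cons {α : Type*} {l : List α} {p v : α} (hp : p ∈ l)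
    (hhead : l.head? = some v) (hlast : l.getLast? = some v) (hpv : p ≠ v) :
    ∃ A q w B, l = A ++ q :: p :: w :: B := by
  obtain ⟨A, B, rfl⟩ := List.append_of_mem hp
  rcases A.eq_nil_or_concat' with rfl | ⟨A, q, rfl⟩
  · simp_all
  rcases B with _ | ⟨w, B⟩
  · simp_all
  exact ⟨A, q, w, B, by simp⟩

lemma EdgePathFrom.rankSel {Δ : Set (Finset V)} {κ : V → Fin d} {S : Finset (Fin d)}
    {γ : List V} {v w : V} (hγ : EdgePathFrom Δ γ v w) (hS : ∀ x ∈ γ, κ x ∈ S) :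
    EdgePathFrom (rankSel Δ κ S) γ v w := by
  refine ⟨⟨hγ.1.1, ?_⟩, hγ.2⟩
  refine List.IsChain.imp_of_mem_imp (fun a b ha hb hab => ⟨hab, ?_⟩) hγ.1.2
  simp only [Finset.mem_insert, Finset.mem_singleton]
  rintro x (rfl | rfl)
  exacts [hS x ha, hS x hb]

namespace IsBalancedLinkConn

variable {Δ : Set (Finset V)} {κ : V → Fin d} {C S : Finset (Fin d)}

theorem exists_edgeEquiv_detour (hG : IsBalancedLinkConn κ Δ C) (hSC : S ⊆ C)
    (hS : S.card = 2) {p q w : V} (hqp : ({q, p} : Finset V) ∈ Δ)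
    (hpw : ({p, w} : Finset V) ∈ Δ) (hpS : κ p ∉ S) (A B : List V) :
    ∃ l : List V, (∀ x ∈ l, κ x ∈ S) ∧
      EdgeEquiv Δ (A ++ q :: p :: w :: B) (A ++ q :: (l ++ w :: B)) := by
  by_cases hdegen : q = p ∨ w = p
  · refine ⟨[], by simp, .rel _ _ (.contract A B q p w ?_)⟩
    rcases hdegen with rfl | rfl <;> simpa
  obtain ⟨hqp', hwp⟩ := not_or.1 hdegen
  have hp : ({p} : Finset V) ∈ Δ := hG.down_closed _ hpw _ (by simp)
  have hSC' : S ⊆ C.erase (κ p) := fun s hs =>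
    Finset.mem_erase.2 ⟨fun h => hpS (h ▸ hs), hSC hs⟩
  obtain ⟨l, hl, hlS⟩ := (hG.link_singleton hp).joinedVia hSC' hS
    (singleton_mem_link_singleton hG.down_closed (by rwa [Finset.pair_comm]) hqp')
    (singleton_mem_link_singleton hG.down_closed hpw hwp)
  exact ⟨l, hlS, edgeEquiv_of_isChain_link hl A B⟩

theorem exists_rankSel_edgeEquiv (hG : IsBalancedLinkConn κ Δ C) (hSC : S ⊆ C)
    (hS : S.card = 2) {v₀ : V} (hv₀ : κ v₀ ∈ S) {γ : List V} (hγ : EdgePathFrom Δ γ v₀ v₀) :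
    ∃ γ' : List V, EdgePathFrom (rankSel Δ κ S) γ' v₀ v₀ ∧ EdgeEquiv Δ γ γ' := by
  by_cases hall : ∀ x ∈ γ, κ x ∈ S
  · exact ⟨γ, hγ.rankSel hall, .refl γ⟩
  obtain ⟨p, hp, hpS⟩ : ∃ p ∈ γ, κ p ∉ S := by simpa using hall
  obtain ⟨A, q, w, B, hsplit⟩ := List.exists_eq_append_cons_cons_cons hp hγ.2.1 hγ.2.2
    (fun h => hpS (h ▸ hv₀))
  have hedges : ({q, p} : Finset V) ∈ Δ ∧ ({p, w} : Finset V) ∈ Δ := by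
    have hchain := (isEdgePath_iff.1 hγ.1).2
    simp only [hsplit, List.isChain_append_cons_cons, List.isChain_cons_cons] at hchain
    exact ⟨hchain.2.1, hchain.2.2.1⟩
  obtain ⟨l, hlS, hequiv⟩ := hG.exists_edgeEquiv_detour hSC hS hedges.1 hedges.2 hpS A B
  obtain ⟨γ', hγ', hequiv'⟩ := hG.exists_rankSel_edgeEquiv hSC hS hv₀
    ((hequiv.edgePathFrom_iff hG.down_closed).1 (hsplit ▸ hγ))
  exact ⟨γ', hγ', hsplit ▸ .trans _ _ _ hequiv hequiv'⟩
termination_by γ.countP (fun x => κ x ∉ S)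
decreasing_by simpa [hsplit, List.countP_append, List.countP_cons, hpS] using hlS

end IsBalancedLinkConn

end

theorem edgePathGroup_rep_rankSel_general {V : Type*} [DecidableEq V] (d : ℕ)
    (Δ : Set (Finset V)) (κ : V → Fin d)
    (hcplx : IsComplex Δ) (hII : IsBalanced Δ κ) (hIII : LinksConn Δ d)
    (S : Finset (Fin d)) (hS : S.card = 2)
    (v₀ : V) (hv₀ : ({v₀} : Finset V) ∈ rankSel Δ κ S)
    (γ : List V) (hγ : EdgePathFrom Δ γ v₀ v₀) :
    ∃ γ' : List V, EdgePathFrom (rankSel Δ κ S) γ' v₀ v₀ ∧ EdgeEquiv Δ γ γ' := by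
  have hG : IsBalancedLinkConn κ Δ Finset.univ :=
    ⟨hcplx.1, fun _ _ _ _ => Finset.mem_univ _, hII, by simpa using hIII⟩
  exact hG.exists_rankSel_edgeEquiv (Finset.subset_univ S) hS (hv₀.2 v₀ (by simp)) hγ

/-- If `Δ` is a `(d-1)`-dimensional simplicial complex, `d ≥ 2`,
satisfying properties (I)–(III), `S` a set of two colors, and `v₀` a vertex of `Δ_S`,
then every equivalence class in the edge-path group `E(Δ, v₀)` is represented by a
closed edge path at `v₀` all of whose edges lie in `Δ_S`. -/
theorem edgePathGroup_rep_rankSel {V : Type*} [Fintype V] [DecidableEq V] (d : ℕ)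
    (hd : 2 ≤ d) (Δ : Set (Finset V)) (κ : V → Fin d)
    (hcplx : IsComplex Δ) (hdim : HasDim Δ d)
    (hI : IsPure Δ d) (hII : IsBalanced Δ κ) (hIII : LinksConn Δ d)
    (S : Finset (Fin d)) (hS : S.card = 2)
    (v₀ : V) (hv₀ : ({v₀} : Finset V) ∈ rankSel Δ κ S)
    (γ : List V) (hγ : EdgePathFrom Δ γ v₀ v₀) :
    ∃ γ' : List V, EdgePathFrom (rankSel Δ κ S) γ' v₀ v₀ ∧ EdgeEquiv Δ γ γ' :=
  edgePathGroup_rep_rankSel_general d Δ κ hcplx hII hIII S hS v₀ hv₀ γ hγ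
end

section
/- Let Δ be a (d−1)-dimensional simplicial complex with d ≥ 2 satisfying properties (I)–(III), let S ⊆ {1,…,d} with |S| = 2, and let T be any spanning tree of the 1-skeleton of Δ. Then the group G(Δ,T) is generated by the images of the generators (v,v′) with {v,v′} ∈ Δ_S. -/
/-- The generators of the group `G(Δ, T)`: ordered pairs of vertices spanning a face
of `Δ`. -/
def EdgeGen {V : Type*} [DecidableEq V] (Δ : Set (Finset V)) : Type _ :=
  {p : V × V // ({p.1, p.2} : Finset V) ∈ Δ}

/-- The relations of the group `G(Δ, T)`: [R1] `(v,v') = 1` whenever `{v,v'}` is an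
edge of the spanning tree `T`, and [R2] `(v,v')(v',v'') = (v,v'')` whenever
`{v,v',v''} ∈ Δ`. -/
def GRels {V : Type*} [DecidableEq V] (Δ : Set (Finset V)) (T : SimpleGraph V) :
    Set (FreeGroup (EdgeGen Δ)) :=
  {r | (∃ p : EdgeGen Δ, T.Adj p.1.1 p.1.2 ∧ r = FreeGroup.of p) ∨
    (∃ (x y z : V) (h1 : ({x, y} : Finset V) ∈ Δ) (h2 : ({y, z} : Finset V) ∈ Δ)
      (h3 : ({x, z} : Finset V) ∈ Δ), ({x, y, z} : Finset V) ∈ Δ ∧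
      r = FreeGroup.of (⟨(x, y), h1⟩ : EdgeGen Δ) * FreeGroup.of (⟨(y, z), h2⟩ : EdgeGen Δ) *
        (FreeGroup.of (⟨(x, z), h3⟩ : EdgeGen Δ))⁻¹)}

/-!
Call a vertex marked if its colour lies in `S`. By balancedness every facet has two marked
vertices, and an induction on the dimension, passing to links of unmarked vertices, shows that
the marked vertices span a connected subcomplex; in particular the marked neighbours of an
unmarked vertex `w` are joined by marked edges of `lk w`. Relation [R2] along such a path shows
that once one generator `(w, c)` with `c` marked lies in the subgroup `H` generated by `Δ_S`,
all `(w, a)` with `a` marked do. This propagates along the spanning tree, as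
`(w, c) = (w, v)(v, c)` with `(w, v) = 1` for a tree edge, and finally
`(v, w) = (v, c)(w, c)⁻¹` for a marked `c` in a facet containing `{v, w}`.
-/

open Finset Relation

section Connectivity

variable {V : Type*} [DecidableEq V]

def IsTwiceMarked (Γ : Set (Finset V)) (m : ℕ) (P : V → Prop) [DecidablePred P] : Prop :=
  ∀ F ∈ Γ, F.card = m → 2 ≤ #(F.filter P)

def MarkedAdj (Γ : Set (Finset V)) (P : V → Prop) (x y : V) : Prop :=
  ({x, y} : Finset V) ∈ Γ ∧ P x ∧ P y

structure IsPureConnLinks (Γ : Set (Finset V)) (m : ℕ) : Prop where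
  isLowerSet : IsLowerSet Γ
  exists_superset : ∀ F ∈ Γ, ∃ G ∈ Γ, F ⊆ G ∧ G.card = m
  linksConn : LinksConn Γ m

variable {Γ : Set (Finset V)}

theorem mem_link {F G : Finset V} :
    G ∈ link Γ F ↔ G ∈ Γ ∧ Disjoint F G ∧ F ∪ G ∈ Γ :=
  Iff.rfl

theorem mem_link_singleton {x : V} {G : Finset V} :
    G ∈ link Γ {x} ↔ G ∈ Γ ∧ x ∉ G ∧ insert x G ∈ Γ := by
  rw [mem_link, disjoint_singleton_left, ← insert_eq]

theorem singleton_mem_link_singleton_s7 (hΓ : IsLowerSet Γ) {x a : V}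
    (hxa : ({x, a} : Finset V) ∈ Γ) (hax : a ≠ x) : ({a} : Finset V) ∈ link Γ {x} :=
  mem_link_singleton.2 ⟨hΓ (by simp) hxa, by simpa using hax.symm, hxa⟩

theorem link_link_singleton (hΓ : IsLowerSet Γ) {x : V} {F : Finset V}
    (hx : x ∉ F) : link (link Γ {x}) F = link Γ (insert x F) := by
  ext G
  rw [mem_link, mem_link_singleton, mem_link_singleton, mem_link, disjoint_insert_left,
    insert_union, mem_union, not_or]
  constructor
  · rintro ⟨⟨hG, hxG, -⟩, hFG, -, -, hFGx⟩
    exact ⟨hG, ⟨hxG, hFG⟩, hFGx⟩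
  · rintro ⟨hG, ⟨hxG, hFG⟩, hFGx⟩
    exact ⟨⟨hG, hxG, hΓ (insert_subset_insert _ subset_union_right) hFGx⟩, hFG,
      hΓ (subset_insert _ _) hFGx, ⟨hx, hxG⟩, hFGx⟩

namespace IsPureConnLinks

variable {m : ℕ}

theorem link_singleton (h : IsPureConnLinks Γ m) (x : V) :
    IsPureConnLinks (link Γ {x}) (m - 1) where
  isLowerSet F G hGF hF := by
    obtain ⟨hF, hxF, hxFΓ⟩ := mem_link_singleton.1 hF
    exact mem_link_singleton.2 ⟨h.isLowerSet hGF hF, fun hxG => hxF (hGF hxG),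
      h.isLowerSet (insert_subset_insert x hGF) hxFΓ⟩
  exists_superset F hF := by
    obtain ⟨-, hxF, hxFΓ⟩ := mem_link_singleton.1 hF
    obtain ⟨G, hG, hxFG, hGcard⟩ := h.exists_superset _ hxFΓ
    have hxG : x ∈ G := hxFG (mem_insert_self x F)
    refine ⟨G.erase x, mem_link_singleton.2 ⟨h.isLowerSet (erase_subset x G) hG,
      notMem_erase x G, by rwa [insert_erase hxG]⟩, ?_, by rw [card_erase_of_mem hxG, hGcard]⟩
    exact subset_erase.2 ⟨(subset_insert x F).trans hxFG, hxF⟩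
  linksConn F hF hFcard := by
    obtain ⟨hF, hxF, hxFΓ⟩ := mem_link_singleton.1 hF
    rw [link_link_singleton h.isLowerSet hxF]
    exact h.linksConn _ hxFΓ (by rw [card_insert_of_notMem hxF]; omega)

theorem conn (h : IsPureConnLinks Γ m) (hm : 2 ≤ m) : Conn Γ := by
  intro v w hv hw
  have hlink : link Γ ∅ = Γ := by ext G; simp [link]
  rw [← hlink] at hv hw ⊢
  exact h.linksConn ∅ (h.isLowerSet (empty_subset _) (hlink ▸ hv)) (by rw [card_empty]; omega)
    v w hv hw

variable {P : V → Prop} [DecidablePred P]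

theorem two_le (h : IsPureConnLinks Γ m) (hP : IsTwiceMarked Γ m P)
    {F : Finset V} (hF : F ∈ Γ) : 2 ≤ m := by
  obtain ⟨G, hG, -, rfl⟩ := h.exists_superset F hF
  exact (hP G hG rfl).trans (card_filter_le G P)

theorem exists_insert_mem (h : IsPureConnLinks Γ m)
    (hP : IsTwiceMarked Γ m P) {F : Finset V} (hF : F ∈ Γ) :
    ∃ c, P c ∧ insert c F ∈ Γ := by
  obtain ⟨G, hG, hFG, hGcard⟩ := h.exists_superset F hF
  obtain ⟨c, hc⟩ := card_pos.1 (by have := hP G hG hGcard; omega : 0 < #(G.filter P))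
  obtain ⟨hcG, hPc⟩ := mem_filter.1 hc
  exact ⟨c, hPc, h.isLowerSet (insert_subset hcG hFG) hG⟩

theorem isTwiceMarked_link (h : IsPureConnLinks Γ m)
    (hP : IsTwiceMarked Γ m P) {x : V} (hx : ¬ P x) :
    IsTwiceMarked (link Γ {x}) (m - 1) P := by
  intro F hF hFcard
  obtain ⟨-, hxF, hxFΓ⟩ := mem_link_singleton.1 hF
  have := hP _ hxFΓ (by have := h.two_le hP hxFΓ; rw [card_insert_of_notMem hxF]; omega)
  rwa [filter_insert, if_neg hx] at this

theorem reflTransGen_markedAdj (h : IsPureConnLinks Γ m)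
    (hP : IsTwiceMarked Γ m P) {a b : V} (ha : ({a} : Finset V) ∈ Γ)
    (hb : ({b} : Finset V) ∈ Γ) (hPa : P a) (hPb : P b) :
    ReflTransGen (MarkedAdj Γ P) a b := by
  induction m generalizing Γ a b with
  | zero => have := h.two_le hP ha; omega
  | succ m ih =>
    have marked_nbrs_conn : ∀ {x a' b' : V}, ({x, a'} : Finset V) ∈ Γ →
        ({x, b'} : Finset V) ∈ Γ → P a' → P b' → ReflTransGen (MarkedAdj Γ P) a' b' := by
      intro x a' b' ha' hb' hPa' hPb'
      by_cases hPx : P x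
      · exact .tail (.single ⟨pair_comm x a' ▸ ha', hPa', hPx⟩) ⟨hb', hPx, hPb'⟩
      · have hlink := ih (h.link_singleton x) (h.isTwiceMarked_link hP hPx)
          (singleton_mem_link_singleton_s7 h.isLowerSet ha' fun e => hPx (e ▸ hPa'))
          (singleton_mem_link_singleton_s7 h.isLowerSet hb' fun e => hPx (e ▸ hPb')) hPa' hPb'
        exact ReflTransGen.mono (fun p q hpq => ⟨(mem_link_singleton.1 hpq.1).1, hpq.2⟩) _ _
          hlink
    have walk : ∀ y, ReflTransGen (fun p q => ({p, q} : Finset V) ∈ Γ) a y →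
        ∀ b', ({y, b'} : Finset V) ∈ Γ → P b' →
        ReflTransGen (MarkedAdj Γ P) a b' := by
      intro y hy
      induction hy with
      | refl =>
        exact fun b' hb' hPb' => marked_nbrs_conn (by rwa [pair_eq_singleton]) hb' hPa hPb'
      | tail _ hvw ihv =>
        intro b' hb' hPb'
        obtain ⟨c, hPc, hc⟩ := h.exists_insert_mem hP hvw
        exact (ihv c (h.isLowerSet (by grind) hc) hPc).trans
          (marked_nbrs_conn (h.isLowerSet (by grind) hc) hb' hPc hPb')
    exact walk b (h.conn (h.two_le hP ha) a b ha hb) b (by rwa [pair_eq_singleton]) hPb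

end IsPureConnLinks

end Connectivity

namespace GRels

variable {V : Type*} [DecidableEq V] {Δ : Set (Finset V)}

def gen (T : SimpleGraph V) {v w : V} (h : ({v, w} : Finset V) ∈ Δ) :
    PresentedGroup (GRels Δ T) :=
  PresentedGroup.of ⟨(v, w), h⟩

variable {T : SimpleGraph V}

theorem gen_mul_gen {x y z : V} (hxyz : ({x, y, z} : Finset V) ∈ Δ)
    (hxy : ({x, y} : Finset V) ∈ Δ) (hyz : ({y, z} : Finset V) ∈ Δ)
    (hxz : ({x, z} : Finset V) ∈ Δ) : gen T hxy * gen T hyz = gen T hxz :=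
  (map_mul _ _ _).symm.trans <|
    PresentedGroup.mk_eq_mk_of_mul_inv_mem (Or.inr ⟨x, y, z, hxy, hyz, hxz, hxyz, rfl⟩)

theorem gen_eq_one_of_adj {v w : V} (hvw : T.Adj v w) (h : ({v, w} : Finset V) ∈ Δ) :
    gen T h = 1 :=
  PresentedGroup.one_of_mem (Or.inl ⟨_, hvw, rfl⟩)

theorem gen_self {v : V} (h : ({v, v} : Finset V) ∈ Δ) : gen T h = 1 :=
  mul_eq_left.1 (gen_mul_gen (by simpa using h) h h h)

theorem gen_swap (hΔ : IsLowerSet Δ) {v w : V} (hvw : ({v, w} : Finset V) ∈ Δ)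
    (hwv : ({w, v} : Finset V) ∈ Δ) : gen T hwv = (gen T hvw)⁻¹ :=
  eq_inv_of_mul_eq_one_right <| by
    rw [gen_mul_gen (by simpa [pair_comm] using hvw) hvw hwv (hΔ (by simp) hvw), gen_self]

variable {m : ℕ} {P : V → Prop} [DecidablePred P] {H : Subgroup (PresentedGroup (GRels Δ T))}

theorem gen_mem_of_gen_mem (hΔ : IsPureConnLinks Δ m)
    (hP : IsTwiceMarked Δ m P)
    (hH : ∀ {v w : V} (h : ({v, w} : Finset V) ∈ Δ), P v → P w → gen T h ∈ H)
    {w c a : V} (hwc : ({w, c} : Finset V) ∈ Δ) (hPc : P c) (hc : gen T hwc ∈ H)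
    (hwa : ({w, a} : Finset V) ∈ Δ) (hPa : P a) : gen T hwa ∈ H := by
  by_cases hPw : P w
  · exact hH hwa hPw hPa
  have hpath := (hΔ.link_singleton w).reflTransGen_markedAdj (hΔ.isTwiceMarked_link hP hPw)
    (singleton_mem_link_singleton_s7 hΔ.isLowerSet hwc fun e => hPw (e ▸ hPc))
    (singleton_mem_link_singleton_s7 hΔ.isLowerSet hwa fun e => hPw (e ▸ hPa)) hPc hPa
  suffices ∀ y, ReflTransGen (MarkedAdj (link Δ {w}) P) c y →
      ∀ hwy : ({w, y} : Finset V) ∈ Δ, gen T hwy ∈ H from this a hpath hwa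
  intro y hy
  induction hy with
  | refl => exact fun _ => hc
  | @tail x y _ hxy ih =>
    intro hwy
    obtain ⟨hxyΔ, hPx, hPy⟩ := hxy
    have hwxy := (mem_link_singleton.1 hxyΔ).2.2
    have hwx : ({w, x} : Finset V) ∈ Δ := hΔ.isLowerSet (by simp [insert_subset_insert]) hwxy
    rw [← gen_mul_gen hwxy hwx (mem_link_singleton.1 hxyΔ).1 hwy]
    exact H.mul_mem (ih hwx) (hH _ hPx hPy)

theorem gen_mem_of_adj (hΔ : IsPureConnLinks Δ m)
    (hP : IsTwiceMarked Δ m P)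
    (hH : ∀ {v w : V} (h : ({v, w} : Finset V) ∈ Δ), P v → P w → gen T h ∈ H)
    {v w : V} (hvw : T.Adj v w) (hvwΔ : ({v, w} : Finset V) ∈ Δ)
    (hv : ∀ {a : V} (hva : ({v, a} : Finset V) ∈ Δ), P a → gen T hva ∈ H)
    {a : V} (hwa : ({w, a} : Finset V) ∈ Δ) (hPa : P a) : gen T hwa ∈ H := by
  obtain ⟨c, hPc, hcvw⟩ := hΔ.exists_insert_mem hP hvwΔ
  have hwvc : ({w, v, c} : Finset V) ∈ Δ := hΔ.isLowerSet (by grind) hcvw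
  have hwc : ({w, c} : Finset V) ∈ Δ := hΔ.isLowerSet (by grind) hcvw
  have hvc : ({v, c} : Finset V) ∈ Δ := hΔ.isLowerSet (by grind) hcvw
  have hwv : ({w, v} : Finset V) ∈ Δ := pair_comm v w ▸ hvwΔ
  refine gen_mem_of_gen_mem hΔ hP hH hwc hPc ?_ hwa hPa
  rw [← gen_mul_gen hwvc hwv hvc hwc, gen_eq_one_of_adj hvw.symm, one_mul]
  exact hv hvc hPc

theorem gen_mem (hΔ : IsPureConnLinks Δ m) (hP : IsTwiceMarked Δ m P)
    (hT : T.Preconnected) (hTΔ : ∀ v w : V, T.Adj v w → ({v, w} : Finset V) ∈ Δ)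
    (hH : ∀ {v w : V} (h : ({v, w} : Finset V) ∈ Δ), P v → P w → gen T h ∈ H)
    {v w : V} (hvw : ({v, w} : Finset V) ∈ Δ) : gen T hvw ∈ H := by
  obtain ⟨c, hPc, hcvw⟩ := hΔ.exists_insert_mem hP hvw
  have marked_nbrs : ∀ y {a : V} (hya : ({y, a} : Finset V) ∈ Δ), P a → gen T hya ∈ H := by
    intro y
    induction (SimpleGraph.reachable_iff_reflTransGen c y).1 (hT c y) with
    | refl => exact fun hca hPa => hH hca hPc hPa
    | @tail x y _ hxy ih => exact gen_mem_of_adj hΔ hP hH hxy (hTΔ x y hxy) ih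
  have hvc : ({v, c} : Finset V) ∈ Δ := hΔ.isLowerSet (by grind) hcvw
  have hwc : ({w, c} : Finset V) ∈ Δ := hΔ.isLowerSet (by grind) hcvw
  rw [← gen_mul_gen (hΔ.isLowerSet (by grind) hcvw) hvc (pair_comm w c ▸ hwc) hvw,
    gen_swap hΔ.isLowerSet hwc]
  exact H.mul_mem (marked_nbrs v hvc hPc) (H.inv_mem (marked_nbrs w hwc hPc))

end GRels

theorem exists_isFacet_superset {V : Type*} [Finite V] {Δ : Set (Finset V)} {F : Finset V}
    (hF : F ∈ Δ) : ∃ G, IsFacet Δ G ∧ F ⊆ G := by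
  obtain ⟨G, hFG, hG⟩ := Δ.toFinite.exists_le_maximal hF
  exact ⟨G, ⟨hG.prop, fun G' hG' hGG' => (hG.le_of_ge hG' hGG').antisymm hGG'⟩, hFG⟩

theorem card_le_card_filter_of_injOn {V C : Type*} [Fintype C] [DecidableEq C] {κ : V → C}
    {F : Finset V} (hκ : Set.InjOn κ F) (hF : F.card = Fintype.card C) (S : Finset C) :
    S.card ≤ #(F.filter (κ · ∈ S)) := by
  have himage : F.image κ = univ := eq_univ_of_card _ (by rw [card_image_of_injOn hκ, hF])
  calc S.card = #((F.image κ).filter (· ∈ S)) := by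
        rw [himage, filter_mem_eq_inter, univ_inter]
    _ = #((F.filter (κ · ∈ S)).image κ) := by rw [filter_image]
    _ ≤ #(F.filter (κ · ∈ S)) := card_image_le

theorem presentedGroup_generated_by_rankSel_general {V : Type*} [Fintype V] [DecidableEq V]
    (d : ℕ) (Δ : Set (Finset V)) (κ : V → Fin d)
    (hcplx : IsComplex Δ)
    (hI : IsPure Δ d) (hII : IsBalanced Δ κ) (hIII : LinksConn Δ d)
    (S : Finset (Fin d)) (hS : S.card = 2)
    (T : SimpleGraph V) (hT : T.IsTree)
    (hTsub : ∀ a b : V, T.Adj a b → ({a, b} : Finset V) ∈ Δ) :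
    Subgroup.closure
      {g : PresentedGroup (GRels Δ T) |
        ∃ p : EdgeGen Δ, ({p.1.1, p.1.2} : Finset V) ∈ rankSel Δ κ S ∧
          g = PresentedGroup.of p} = ⊤ := by
  have hΔ : IsPureConnLinks Δ d := by
    refine ⟨fun F G hGF hF => hcplx.1 F hF G hGF, fun F hF => ?_, hIII⟩
    obtain ⟨G, hG, hFG⟩ := exists_isFacet_superset hF
    exact ⟨G, hG.1, hFG, hI G hG⟩
  have hP : IsTwiceMarked Δ d (κ · ∈ S) := fun F hF hFd =>
    hS ▸ card_le_card_filter_of_injOn (hII F hF) (by rwa [Fintype.card_fin]) S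
  refine (Subgroup.eq_top_iff' _).2 (PresentedGroup.generated_by _ _ fun ⟨(v, w), hvw⟩ => ?_)
  refine GRels.gen_mem hΔ hP hT.connected.preconnected hTsub (fun hvw hv hw => ?_) hvw
  exact Subgroup.subset_closure ⟨_, ⟨hvw, by simp [hv, hw]⟩, rfl⟩

/-- If `Δ` is a `(d-1)`-dimensional simplicial complex, `d ≥ 2`,
satisfying properties (I)–(III), `S` a set of two colors, and `T` any spanning tree of
the 1-skeleton of `Δ`, then the group `G(Δ, T)` is generated by the images of the
generators `(v, v')` with `{v, v'} ∈ Δ_S`. -/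
theorem presentedGroup_generated_by_rankSel {V : Type*} [Fintype V] [DecidableEq V]
    (d : ℕ) (hd : 2 ≤ d) (Δ : Set (Finset V)) (κ : V → Fin d)
    (hcplx : IsComplex Δ) (hdim : HasDim Δ d)
    (hI : IsPure Δ d) (hII : IsBalanced Δ κ) (hIII : LinksConn Δ d)
    (S : Finset (Fin d)) (hS : S.card = 2)
    (T : SimpleGraph V) (hT : T.IsTree)
    (hTsub : ∀ a b : V, T.Adj a b → ({a, b} : Finset V) ∈ Δ) :
    Subgroup.closure
      {g : PresentedGroup (GRels Δ T) |
        ∃ p : EdgeGen Δ, ({p.1.1, p.1.2} : Finset V) ∈ rankSel Δ κ S ∧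
          g = PresentedGroup.of p} = ⊤ :=
  presentedGroup_generated_by_rankSel_general d Δ κ hcplx hI hII hIII S hS T hT hTsub
end
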